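/- arXiv:1802.08485 — 2 statements merged into one kernel-verified Lean document; each statement's English description precedes it below -/
import Mathlib

section
/- (Ping-pong lemma) Let S be a set and f₁, f₂ two bijections of S. Assume there exist subsets S₁, S₂ of S with S₁ ⊄ S₂ and S₂ ⊄ S₁, such that f₁ⁿ(S₁) ⊆ S₂ and f₂ⁿ(S₂) ⊆ S₁ for all nonzero integers n. Then f₁ and f₂ generate a free group of rank 2 inside the symmetric group of S. -/
/-!
Ping-pong for a family `H i →* G` acting on sets `X i`: a reduced word whose first and last
letters both lie in `H i` maps every `X k` with `k ≠ i` into `X i`, so it is not `1` because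
`X k ⊄ X i`. When every `H i` has at least three elements, every other reduced word is conjugate,
within its first factor, to such a word. Each `f₁ⁿ`, `f₂ⁿ` with `n ≠ 0` is the image of a
nontrivial element of an infinite cyclic factor, which gives the theorem.
-/

open Cardinal Pointwise

namespace Monoid.CoprodI

variable {ι G α : Type*} [Group G] [MulAction G α] {H : ι → Type*} [∀ i, Group (H i)]
  (f : ∀ i, H i →* G) (X : ι → Set α)
  (hpp : Pairwise fun i j => ∀ h : H i, h ≠ 1 → f i h • X j ⊆ X i)
  (hX : Pairwise fun i j => ¬ X i ⊆ X j)
include hpp hX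

theorem lift_word_prod_ne_one_of_ne_head_of_ne_last {i j k} (w : NeWord H i j)
    (hki : k ≠ i) (hkj : k ≠ j) : lift f w.prod ≠ 1 := fun h1 =>
  hX hki (by simpa [h1] using lift_word_ping_pong f X hpp w hkj.symm)

variable [Nontrivial ι]

theorem lift_word_prod_ne_one_of_head_eq_last {i} (w : NeWord H i i) : lift f w.prod ≠ 1 :=
  let ⟨_, hk⟩ := exists_ne i
  lift_word_prod_ne_one_of_ne_head_of_ne_last f X hpp hX w hk hk

/-- Conjugating by some `h ∈ H i` with `h ≠ 1` and `h * w.head ≠ 1` turns `w` into a word that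
starts and ends in `H i`. -/
theorem lift_word_prod_ne_one_of_three_le_card_head {i j} (w : NeWord H i j)
    (hcard : 3 ≤ #(H i)) (hij : i ≠ j) : lift f w.prod ≠ 1 := by
  obtain ⟨h, hh, hhw⟩ := exists_ne_ne_of_three_le hcard 1 w.head⁻¹
  have hhw' : h * w.head ≠ 1 := by
    rw [← div_inv_eq_mul]
    exact div_ne_one_of_ne hhw
  let w' : NeWord H i i :=
    (w.mulHead h hhw').append hij.symm (NeWord.singleton h⁻¹ (inv_ne_one.mpr hh))
  intro h1
  apply lift_word_prod_ne_one_of_head_eq_last f X hpp hX w'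
  simp [w', h1]

theorem lift_word_prod_ne_one (hcard : ∀ i, 3 ≤ #(H i)) {i j} (w : NeWord H i j) :
    lift f w.prod ≠ 1 := by
  rcases eq_or_ne i j with rfl | hij
  · exact lift_word_prod_ne_one_of_head_eq_last f X hpp hX w
  · exact lift_word_prod_ne_one_of_three_le_card_head f X hpp hX w (hcard i) hij

theorem lift_injective_of_ping_pong_of_not_subset (hcard : ∀ i, 3 ≤ #(H i)) :
    Function.Injective (lift f) := by
  classical
  refine (injective_iff_map_eq_one (lift f)).mpr fun g hg => ?_
  obtain ⟨w, rfl⟩ := Word.equiv.symm.surjective g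
  by_contra hw
  obtain ⟨i, j, w, rfl⟩ := NeWord.of_word w fun hw' => hw (by simp [hw', Word.equiv])
  exact lift_word_prod_ne_one f X hpp hX hcard w hg

end Monoid.CoprodI

theorem FreeGroup.injective_lift_of_ping_pong_of_not_subset {ι G α : Type*} [Nontrivial ι]
    [Group G] [MulAction G α] (a : ι → G) (X : ι → Set α)
    (hpp : Pairwise fun i j => ∀ n : ℤ, n ≠ 0 → a i ^ n • X j ⊆ X i)
    (hX : Pairwise fun i j => ¬ X i ⊆ X j) :
    Function.Injective (FreeGroup.lift a) := by
  have hlift : FreeGroup.lift a =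
      (Monoid.CoprodI.lift fun i => FreeGroup.lift fun _ : Unit => a i).comp
        freeGroupEquivCoprodI.toMonoidHom := by
    ext
    simp
  rw [hlift, MonoidHom.coe_comp]
  refine .comp (Monoid.CoprodI.lift_injective_of_ping_pong_of_not_subset _ X ?_ hX ?_)
    freeGroupEquivCoprodI.injective
  · intro i j hij
    refine FreeGroup.freeGroupUnitEquivInt.symm.forall_congr_right.mp fun n hn => ?_
    have hn0 : n ≠ 0 := by rintro rfl; exact hn (by simp [FreeGroup.freeGroupUnitEquivInt])
    simpa [FreeGroup.freeGroupUnitEquivInt] using hpp hij n hn0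
  · intro i
    rw [FreeGroup.freeGroupUnitEquivInt.cardinal_eq, mk_denumerable]
    exact natCast_le_aleph0

theorem stmt_4 (S : Type*) (f₁ f₂ : Equiv.Perm S) (S₁ S₂ : Set S)
    (h₁₂ : ¬ S₁ ⊆ S₂) (h₂₁ : ¬ S₂ ⊆ S₁)
    (hf₁ : ∀ n : ℤ, n ≠ 0 → (⇑(f₁ ^ n)) '' S₁ ⊆ S₂)
    (hf₂ : ∀ n : ℤ, n ≠ 0 → (⇑(f₂ ^ n)) '' S₂ ⊆ S₁) :
    Function.Injective
      (FreeGroup.lift (fun b : Bool => if b then f₁ else f₂) :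
        FreeGroup Bool →* Equiv.Perm S) := by
  have hsmul (g : Equiv.Perm S) (T : Set S) : g • T = ⇑g '' T := rfl
  apply FreeGroup.injective_lift_of_ping_pong_of_not_subset _ (fun b => if b then S₂ else S₁)
  · rintro (_ | _) (_ | _) hij n hn <;> simp_all
  · rintro (_ | _) (_ | _) hij <;> simp_all
end

section
/- (Malcev) Let G be a group and n a positive integer such that every finitely generated subgroup of G embeds into GL_n(K) for some field K (possibly depending on the subgroup). Then there exists a field K' such that G embeds into GL_n(K'). -/
/-!
Index by the finite subsets `s` of `G`: each `⟨s⟩` has a faithful representation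
`φ_s : ⟨s⟩ → GL_n(K_s)`. Along an ultrafilter `U` refining `atTop`, every `g` eventually lies in
`⟨s⟩`, so `g ↦ (φ_s g)_s` is a well-defined homomorphism into the ultraproduct
`∏_U GL_n(K_s) = GL_n(∏_U K_s)`, and it is injective because each `φ_s` is.
-/

open Matrix Filter

universe u

namespace Ultrafilter

variable {ι : Type*} (U : Ultrafilter ι) (K : ι → Type*) [∀ i, Field (K i)]

def eventuallyZeroIdeal : Ideal (∀ i, K i) where
  carrier := {f | ∀ᶠ i in U, f i = 0}
  add_mem' ha hb := by filter_upwards [ha, hb] with i hai hbi; simp [hai, hbi]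
  zero_mem' := .of_forall fun _ => rfl
  smul_mem' c _ hf := by filter_upwards [hf] with i hi; simp [hi]

variable {U K}

theorem mem_eventuallyZeroIdeal {f : ∀ i, K i} :
    f ∈ U.eventuallyZeroIdeal K ↔ ∀ᶠ i in U, f i = 0 :=
  Iff.rfl

instance : (U.eventuallyZeroIdeal K).IsMaximal := by
  rw [Ideal.isMaximal_iff]
  refine ⟨fun h1 => ?_, fun J f hle hf hfJ => ?_⟩
  · obtain ⟨i, hi⟩ := (mem_eventuallyZeroIdeal.mp h1).exists
    exact one_ne_zero hi
  · have hf_ne : ∀ᶠ i in U, f i ≠ 0 := Ultrafilter.eventually_not.mpr hf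
    have hinv : 1 - f⁻¹ * f ∈ U.eventuallyZeroIdeal K := by
      filter_upwards [hf_ne] with i hi
      simp [inv_mul_cancel₀ hi]
    simpa using J.add_mem (hle hinv) (J.mul_mem_left f⁻¹ hfJ)

variable (U K) in
abbrev FieldUltraproduct : Type _ := (∀ i, K i) ⧸ U.eventuallyZeroIdeal K

noncomputable instance : Field (U.FieldUltraproduct K) := Ideal.Quotient.field _

theorem FieldUltraproduct.mk_eq_mk_iff {f g : ∀ i, K i} :
    Ideal.Quotient.mk (U.eventuallyZeroIdeal K) f = Ideal.Quotient.mk _ g ↔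
      ∀ᶠ i in U, f i = g i := by
  simp only [Ideal.Quotient.mk_eq_mk_iff_sub_mem, mem_eventuallyZeroIdeal, Pi.sub_apply,
    sub_eq_zero]

variable (U) (n : Type*) [Fintype n] [DecidableEq n]

noncomputable def FieldUltraproduct.matrixMk :
    (∀ i, Matrix n n (K i)) →* Matrix n n (U.FieldUltraproduct K) where
  toFun A := Matrix.of fun a b => Ideal.Quotient.mk _ fun i => A i a b
  map_one' := by
    ext a b
    by_cases hab : a = b
    · subst hab; simp only [Pi.one_apply, one_apply_eq, of_apply]; exact map_one _
    · simp only [Pi.one_apply, one_apply_ne hab, of_apply]; exact map_zero _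
  map_mul' A B := by
    ext a b
    simp only [of_apply, Pi.mul_apply, mul_apply, ← map_mul, ← map_sum]
    congr 1
    ext i
    simp

noncomputable def FieldUltraproduct.glMk :
    (∀ i, GL n (K i)) →* GL n (U.FieldUltraproduct K) :=
  (Units.map (matrixMk U n)).comp MulEquiv.piUnits.symm.toMonoidHom

variable {U n}

theorem FieldUltraproduct.matrixMk_eq_iff {A B : ∀ i, Matrix n n (K i)} :
    matrixMk U n A = matrixMk U n B ↔ ∀ᶠ i in U, A i = B i := by
  simp only [Matrix.ext_iff.symm, matrixMk, MonoidHom.coe_mk, OneHom.coe_mk, of_apply,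
    mk_eq_mk_iff, eventually_all]

theorem FieldUltraproduct.glMk_eq_iff {x y : ∀ i, GL n (K i)} :
    glMk U n x = glMk U n y ↔ ∀ᶠ i in U, x i = y i := by
  simp only [glMk, Units.ext_iff]
  exact matrixMk_eq_iff

end Ultrafilter

theorem exists_injective_monoidHom_of_eventually_mem {ι G N : Type*} [Group G] [Monoid N]
    {M : ι → Type*} [∀ i, Monoid (M i)] (l : Filter ι) [l.NeBot] {H : ι → Subgroup G}
    (hH : ∀ g, ∀ᶠ i in l, g ∈ H i) (φ : ∀ i, H i →* M i) (hφ : ∀ i, Function.Injective (φ i))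
    (Ψ : (∀ i, M i) →* N) (hΨ : ∀ x y, Ψ x = Ψ y ↔ ∀ᶠ i in l, x i = y i) :
    ∃ Φ : G →* N, Function.Injective Φ := by
  classical
  -- the value `1` off `H i` is irrelevant: only `∀ᶠ i in l` statements about `ρ g` are used
  let ρ : G → ∀ i, M i := fun g i => if hg : g ∈ H i then φ i ⟨g, hg⟩ else 1
  have hρ : ∀ g i (hg : g ∈ H i), ρ g i = φ i ⟨g, hg⟩ := fun g i hg => dif_pos hg
  refine ⟨{ toFun g := Ψ (ρ g), map_one' := ?_, map_mul' g g' := ?_ }, fun g g' hgg' => ?_⟩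
  · rw [← map_one Ψ, hΨ]
    exact .of_forall fun i => (hρ 1 i (one_mem _)).trans (map_one (φ i))
  · rw [← map_mul, hΨ]
    filter_upwards [hH g, hH g'] with i hg hg'
    rw [Pi.mul_apply, hρ _ _ hg, hρ _ _ hg', hρ _ _ (mul_mem hg hg'), ← map_mul]
    rfl
  · obtain ⟨i, hi, hg, hg'⟩ := (((hΨ _ _).mp hgg').and ((hH g).and (hH g'))).exists
    rw [hρ _ _ hg, hρ _ _ hg'] at hi
    exact congrArg Subtype.val (hφ i hi)

theorem stmt_9 (G : Type u) [Group G] (n : ℕ)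
    (h : ∀ H : Subgroup G, H.FG → ∃ (K : Type u) (fK : Field K),
      letI := fK; ∃ φ : H →* GL (Fin n) K, Function.Injective φ) :
    ∃ (K' : Type u) (fK' : Field K'),
      letI := fK'; ∃ φ : G →* GL (Fin n) K', Function.Injective φ := by
  choose K fK φ hφ using fun s : Finset G => h (Subgroup.closure s) ⟨s, rfl⟩
  let U : Ultrafilter (Finset G) := .of atTop
  have hmem (g : G) : ∀ᶠ s : Finset G in U, g ∈ Subgroup.closure (s : Set G) :=
    Ultrafilter.of_le _ <| (eventually_ge_atTop {g}).mono fun s hs =>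
      Subgroup.subset_closure (hs (Finset.mem_singleton_self g))
  obtain ⟨Φ, hΦ⟩ := exists_injective_monoidHom_of_eventually_mem (U : Filter (Finset G)) hmem φ hφ
    (Ultrafilter.FieldUltraproduct.glMk U (Fin n)) fun _ _ =>
      Ultrafilter.FieldUltraproduct.glMk_eq_iff
  exact ⟨_, inferInstance, Φ, hΦ⟩
end
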